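/- Let $p: X \to X'$ be a continuous map between topological spaces, let $\mathcal{C}$ and $\mathcal{C}'$ be collections of continuous self-maps of $X$ and $X'$ respectively such that for every $f \in \mathcal{C}$ there exists $f' \in \mathcal{C}'$ with $p \circ f = f' \circ p$. If $S' \subseteq X'$ is exceptional relative to $\mathcal{C}'$, then $S := p^{-1}(S')$ is exceptional relative to $\mathcal{C}$ (provided $S$ is nonempty). -/
import Mathlib


/-- The closure of the forward orbit of `x` under `f`. -/
def orbitClosure {X : Type*} [TopologicalSpace X] (f : X → X) (x : X) : Set X :=
  closure {z | ∃ k : ℕ, f^[k] x = z}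

/-- `S` is exceptional relative to the collection `C` of self-maps: for every `f ∈ C`
and `x ∈ S`, the orbit closure of `x` contains no `f`-periodic point. -/
def IsExceptional {X : Type*} [TopologicalSpace X] (C : Set (X → X)) (S : Set X) : Prop :=
  S.Nonempty ∧ ∀ f ∈ C, ∀ x ∈ S, ∀ y ∈ orbitClosure f x, ¬ ∃ k : ℕ, 1 ≤ k ∧ f^[k] y = y

theorem stmt0 {X X' : Type*} [TopologicalSpace X] [TopologicalSpace X']
    (p : X → X') (hp : Continuous p)
    (C : Set (X → X)) (C' : Set (X' → X'))
    (hC : ∀ f ∈ C, Continuous f) (hC' : ∀ f' ∈ C', Continuous f')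
    (hcomm : ∀ f ∈ C, ∃ f' ∈ C', p ∘ f = f' ∘ p)
    (S' : Set X') (hS' : IsExceptional C' S')
    (hne : (p ⁻¹' S').Nonempty) :
    IsExceptional C (p ⁻¹' S') := by
  refine ⟨hne, ?_⟩
  rintro f hf x hx y hy ⟨k, hk1, hky⟩
  obtain ⟨f', hf', hcom⟩ := hcomm f hf
  have hsemi : ∀ (n : ℕ) (z : X), p (f^[n] z) = f'^[n] (p z) := by
    intro n
    induction n with
    | zero => intro z; rfl
    | succ n ih =>
      intro z
      rw [Function.iterate_succ_apply', Function.iterate_succ_apply',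
        show p (f (f^[n] z)) = f' (p (f^[n] z)) from congrFun hcom _, ih]
  have hpy : p y ∈ orbitClosure f' (p x) := by
    have hsub : {z | ∃ k : ℕ, f^[k] x = z} ⊆ p ⁻¹' orbitClosure f' (p x) := by
      rintro _ ⟨n, rfl⟩
      exact subset_closure ⟨n, (hsemi n x).symm⟩
    exact (closure_minimal hsub (IsClosed.preimage hp isClosed_closure)) hy
  exact hS'.2 f' hf' (p x) hx (p y) hpy ⟨k, hk1, by rw [← hsemi k y, hky]⟩
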